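/- Let M = (E, ρ) be a matroid and let Y ⊆ E be a subset of full rank (ρ(Y) = ρ(E)); set k = ρ(Y) and n = |Y|. Then the restriction M|Y is isomorphic to the uniform matroid U_n^k (equivalently, ρ(A) = min(|A|, k) for every A ⊆ Y) if and only if either Y is a basis of M, or both of the following conditions hold: (1) Y is a cyclic set of M, and (2) for every cyclic flat Z of M with ρ(Z) < k, the set Z ∩ Y is independent in M. -/

import Mathlib

open Finset

structure FinMatroid (α : Type*) [DecidableEq α] where
  E : Finset α
  rk : Finset α → ℕ
  rk_le_card : ∀ A, A ⊆ E → rk A ≤ A.card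
  rk_mono : ∀ A B, A ⊆ B → B ⊆ E → rk A ≤ rk B
  rk_submod : ∀ A B, A ⊆ E → B ⊆ E → rk (A ∪ B) + rk (A ∩ B) ≤ rk A + rk B

namespace FinMatroid

variable {α : Type*} [DecidableEq α]

/-- The closure operator `cl(A) = {e ∈ E : ρ(A ∪ {e}) = ρ(A)}`. -/
def cl (M : FinMatroid α) (A : Finset α) : Finset α :=
  M.E.filter fun e => M.rk (insert e A) = M.rk A

/-- The cyclic operator `cyc(A) = {e ∈ A : ρ(A − {e}) = ρ(A)}`. -/
def cyc (M : FinMatroid α) (A : Finset α) : Finset α :=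
  A.filter fun e => M.rk (A.erase e) = M.rk A

/-- A flat is a set fixed by the closure operator. -/
def IsFlat (M : FinMatroid α) (F : Finset α) : Prop :=
  F ⊆ M.E ∧ M.cl F = F

/-- A cyclic set is a set fixed by the cyclic operator. -/
def IsCyclic (M : FinMatroid α) (U : Finset α) : Prop :=
  U ⊆ M.E ∧ M.cyc U = U

/-- A cyclic flat is a set fixed by both the closure and the cyclic operators. -/
def IsCyclicFlat (M : FinMatroid α) (Z : Finset α) : Prop :=
  Z ⊆ M.E ∧ M.cl Z = Z ∧ M.cyc Z = Z

/-- The minor `M|Y/X`: restriction to `Y` followed by contraction of `X`. -/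
def minor (M : FinMatroid α) (X Y : Finset α) (hXY : X ⊆ Y) (hY : Y ⊆ M.E) :
    FinMatroid α where
  E := Y \ X
  rk A := M.rk (A ∪ X) - M.rk X
  rk_le_card := by
    intro A hA
    have hAE : A ⊆ M.E := fun a ha => hY (mem_sdiff.mp (hA ha)).1
    have hXE : X ⊆ M.E := hXY.trans hY
    have h1 := M.rk_submod A X hAE hXE
    have h2 := M.rk_le_card A hAE
    show M.rk (A ∪ X) - M.rk X ≤ A.card
    omega
  rk_mono := by
    intro A B hAB hB
    have hBE : B ⊆ M.E := fun a ha => hY (mem_sdiff.mp (hB ha)).1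
    have hBX : B ∪ X ⊆ M.E := union_subset hBE (hXY.trans hY)
    have := M.rk_mono (A ∪ X) (B ∪ X) (union_subset_union hAB Subset.rfl) hBX
    show M.rk (A ∪ X) - M.rk X ≤ M.rk (B ∪ X) - M.rk X
    omega
  rk_submod := by
    intro A B hA hB
    have hAE : A ⊆ M.E := fun a ha => hY (mem_sdiff.mp (hA ha)).1
    have hBE : B ⊆ M.E := fun a ha => hY (mem_sdiff.mp (hB ha)).1
    have hXE : X ⊆ M.E := hXY.trans hY
    have hAX : A ∪ X ⊆ M.E := union_subset hAE hXE
    have hBX : B ∪ X ⊆ M.E := union_subset hBE hXE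
    have hsub := M.rk_submod (A ∪ X) (B ∪ X) hAX hBX
    have e1 : (A ∪ X) ∪ (B ∪ X) = (A ∪ B) ∪ X := by
      ext x; simp only [mem_union]; tauto
    have e2 : (A ∪ X) ∩ (B ∪ X) = (A ∩ B) ∪ X := by
      ext x; simp only [mem_union, mem_inter]; tauto
    rw [e1, e2] at hsub
    have h1 : M.rk X ≤ M.rk (A ∪ X) := M.rk_mono X _ subset_union_right hAX
    have h2 : M.rk X ≤ M.rk (B ∪ X) := M.rk_mono X _ subset_union_right hBX
    have hIX : (A ∩ B) ∪ X ⊆ M.E := union_subset (inter_subset_left.trans hAE) hXE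
    have hUX : (A ∪ B) ∪ X ⊆ M.E := union_subset (union_subset hAE hBE) hXE
    have h3 : M.rk X ≤ M.rk ((A ∩ B) ∪ X) := M.rk_mono X _ subset_union_right hIX
    have h4 : M.rk X ≤ M.rk ((A ∪ B) ∪ X) := M.rk_mono X _ subset_union_right hUX
    show M.rk ((A ∪ B) ∪ X) - M.rk X + (M.rk ((A ∩ B) ∪ X) - M.rk X) ≤
      (M.rk (A ∪ X) - M.rk X) + (M.rk (B ∪ X) - M.rk X)
    omega

/-- The restriction `M|Y`. -/
def restrict (M : FinMatroid α) (Y : Finset α) (hY : Y ⊆ M.E) : FinMatroid α where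
  E := Y
  rk := M.rk
  rk_le_card := fun A hA => M.rk_le_card A (hA.trans hY)
  rk_mono := fun A B hAB hB => M.rk_mono A B hAB (hB.trans hY)
  rk_submod := fun A B hA hB => M.rk_submod A B (hA.trans hY) (hB.trans hY)

/-- `M` is binary: it is the matroid of linear dependence of a family of
vectors over the field with two elements. -/
def IsBinary (M : FinMatroid α) : Prop :=
  ∃ (m : ℕ) (φ : α → (Fin m → ZMod 2)),
    ∀ A : Finset α, A ⊆ M.E →
      M.rk A = Module.finrank (ZMod 2) (Submodule.span (ZMod 2) (φ '' (A : Set α)))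

def Simple (M : FinMatroid α) : Prop :=
  (∀ e ∈ M.E, M.rk {e} = 1) ∧
    ∀ e ∈ M.E, ∀ f ∈ M.E, e ≠ f → M.rk ({e, f} : Finset α) = 2

def NoIsthmus (M : FinMatroid α) : Prop :=
  ∀ e ∈ M.E, M.rk (M.E.erase e) = M.rk M.E

def IsMinDist (M : FinMatroid α) (d : ℕ) : Prop :=
  (∃ X ⊆ M.E, M.rk (M.E \ X) < M.rk M.E ∧ X.card = d) ∧
    ∀ X ⊆ M.E, M.rk (M.E \ X) < M.rk M.E → d ≤ X.card

def IsAtomCF (M : FinMatroid α) (Z : Finset α) : Prop :=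
  M.IsCyclicFlat Z ∧ Z ≠ ∅ ∧ ¬ ∃ Z', M.IsCyclicFlat Z' ∧ ∅ ⊂ Z' ∧ Z' ⊂ Z

def IsCoatomCF (M : FinMatroid α) (Z : Finset α) : Prop :=
  M.IsCyclicFlat Z ∧ Z ⊂ M.E ∧ ¬ ∃ Z', M.IsCyclicFlat Z' ∧ Z ⊂ Z' ∧ Z' ⊂ M.E

def IsCircuit (M : FinMatroid α) (C : Finset α) : Prop :=
  C ⊆ M.E ∧ M.rk C < C.card ∧ ∀ D ⊂ C, M.rk D = D.card

end FinMatroid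

/-! If `M|Y` is not uniform, some `A ⊆ Y` has `ρ(A) < min(|A|, k)`; a circuit `C ⊆ A` then spans
the cyclic flat `cl(C)`, of rank `ρ(C) < k`, which meets `Y` in a dependent set. Conversely, in a
uniform restriction deleting one element of a dependent `Y` keeps rank `k`, and every subset of `Y`
of rank `< k` is independent. -/

namespace FinMatroid

variable {α : Type*} [DecidableEq α] (M : FinMatroid α)

lemma rk_empty : M.rk ∅ = 0 :=
  Nat.le_zero.mp (by simpa using M.rk_le_card ∅ (empty_subset _))

lemma rk_eq_card_of_subset {A B : Finset α} (hAB : A ⊆ B) (hB : B ⊆ M.E)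
    (hBind : M.rk B = B.card) : M.rk A = A.card := by
  have hsub := M.rk_submod A (B \ A) (hAB.trans hB) (sdiff_subset.trans hB)
  rw [union_sdiff_of_subset hAB, inter_sdiff_self, M.rk_empty] at hsub
  have hA := M.rk_le_card A (hAB.trans hB)
  have hBA := M.rk_le_card (B \ A) (sdiff_subset.trans hB)
  have hcard := card_sdiff_add_card_eq_card hAB
  omega

lemma rk_union_eq_of_forall_rk_insert_eq {A S : Finset α} (hA : A ⊆ M.E) (hS : S ⊆ M.E)
    (h : ∀ e ∈ S, M.rk (insert e A) = M.rk A) : M.rk (A ∪ S) = M.rk A := by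
  induction S using Finset.induction_on with
  | empty => simp
  | @insert a S _ ih =>
    have haE : a ∈ M.E := hS (mem_insert_self a S)
    have hSE : S ⊆ M.E := (subset_insert a S).trans hS
    have hAS : M.rk (A ∪ S) = M.rk A := ih hSE fun e he => h e (mem_insert_of_mem he)
    have haA : M.rk (insert a A) = M.rk A := h a (mem_insert_self a S)
    have hsub := M.rk_submod (A ∪ S) (insert a A) (union_subset hA hSE) (insert_subset haE hA)
    have hunion : (A ∪ S) ∪ insert a A = A ∪ insert a S := by
      ext x; simp only [mem_union, mem_insert]; tauto
    rw [hunion] at hsub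
    have hinter : M.rk A ≤ M.rk ((A ∪ S) ∩ insert a A) :=
      M.rk_mono _ _ (subset_inter subset_union_left (subset_insert a A))
        (inter_subset_right.trans (insert_subset haE hA))
    have hmono : M.rk A ≤ M.rk (A ∪ insert a S) :=
      M.rk_mono _ _ subset_union_left (union_subset hA (insert_subset haE hSE))
    omega

section Closure

variable {M} {A : Finset α}

lemma cl_subset_ground : M.cl A ⊆ M.E := filter_subset _ _

lemma subset_cl (hA : A ⊆ M.E) : A ⊆ M.cl A := fun e he =>
  mem_filter.mpr ⟨hA he, by rw [insert_eq_self.mpr he]⟩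

lemma rk_cl (hA : A ⊆ M.E) : M.rk (M.cl A) = M.rk A := by
  have h := M.rk_union_eq_of_forall_rk_insert_eq hA cl_subset_ground
    fun e he => (mem_filter.mp he).2
  rwa [union_eq_right.mpr (subset_cl hA)] at h

lemma cl_cl (hA : A ⊆ M.E) : M.cl (M.cl A) = M.cl A := by
  refine Subset.antisymm (fun e he => ?_) (subset_cl cl_subset_ground)
  obtain ⟨heE, hrk⟩ := mem_filter.mp he
  refine mem_filter.mpr ⟨heE, ?_⟩
  have hle : M.rk (insert e A) ≤ M.rk (insert e (M.cl A)) :=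
    M.rk_mono _ _ (insert_subset_insert e (subset_cl hA)) (insert_subset heE cl_subset_ground)
  have hge : M.rk A ≤ M.rk (insert e A) :=
    M.rk_mono _ _ (subset_insert e A) (insert_subset heE hA)
  rw [hrk, rk_cl hA] at hle
  omega

end Closure

section Cyclic

variable {M} {C : Finset α}

lemma IsCyclic.rk_erase (hC : M.IsCyclic C) {e : α} (he : e ∈ C) :
    M.rk (C.erase e) = M.rk C := by
  rw [← hC.2] at he
  exact (mem_filter.mp he).2

lemma IsCyclic.isCyclicFlat_cl (hC : M.IsCyclic C) : M.IsCyclicFlat (M.cl C) := by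
  refine ⟨cl_subset_ground, cl_cl hC.1, filter_true_of_mem fun e he => ?_⟩
  have hle : M.rk ((M.cl C).erase e) ≤ M.rk (M.cl C) :=
    M.rk_mono _ _ (erase_subset e _) cl_subset_ground
  have hge : M.rk C ≤ M.rk ((M.cl C).erase e) := by
    by_cases heC : e ∈ C
    · rw [← hC.rk_erase heC]
      exact M.rk_mono _ _ (erase_subset_erase e (subset_cl hC.1))
        ((erase_subset e _).trans cl_subset_ground)
    · exact M.rk_mono _ _ (subset_erase.mpr ⟨subset_cl hC.1, heC⟩)
        ((erase_subset e _).trans cl_subset_ground)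
  rw [rk_cl hC.1] at hle ⊢
  omega

end Cyclic

section Circuit

variable {M} {A C : Finset α}

lemma exists_isCircuit_subset (hA : A ⊆ M.E) (hdep : M.rk A < A.card) :
    ∃ C ⊆ A, M.IsCircuit C := by
  induction A using Finset.strongInduction with
  | _ A ih =>
    by_cases hmin : ∀ D ⊂ A, M.rk D = D.card
    · exact ⟨A, Subset.rfl, hA, hdep, hmin⟩
    · push Not at hmin
      obtain ⟨D, hDA, hD⟩ := hmin
      have hDE : D ⊆ M.E := hDA.subset.trans hA
      obtain ⟨C, hCD, hC⟩ :=
        ih D hDA hDE (lt_of_le_of_ne (M.rk_le_card D hDE) hD)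
      exact ⟨C, hCD.trans hDA.subset, hC⟩

lemma IsCircuit.isCyclic (hC : M.IsCircuit C) : M.IsCyclic C := by
  refine ⟨hC.1, filter_true_of_mem fun e he => ?_⟩
  have herase := hC.2.2 _ (erase_ssubset he)
  have hcard := card_erase_of_mem he
  have hle := M.rk_mono _ _ (erase_subset e C) hC.1
  have hdep := hC.2.1
  omega

lemma exists_isCyclicFlat_rk_inter_lt_card (hA : A ⊆ M.E) (hdep : M.rk A < A.card) :
    ∃ Z, M.IsCyclicFlat Z ∧ M.rk Z ≤ M.rk A ∧ M.rk (Z ∩ A) < (Z ∩ A).card := by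
  obtain ⟨C, hCA, hC⟩ := exists_isCircuit_subset hA hdep
  have hCE := hC.1
  refine ⟨M.cl C, hC.isCyclic.isCyclicFlat_cl, ?_, ?_⟩
  · rw [rk_cl hCE]
    exact M.rk_mono _ _ hCA hA
  · by_contra! hind
    have hZA : M.cl C ∩ A ⊆ M.E := inter_subset_right.trans hA
    have := M.rk_eq_card_of_subset (subset_inter (subset_cl hCE) hCA) hZA
      (le_antisymm (M.rk_le_card _ hZA) hind)
    exact absurd this hC.2.1.ne

end Circuit

def IsUniformOn (Y : Finset α) : Prop :=
  ∀ A ⊆ Y, M.rk A = min A.card (M.rk Y)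

section Uniform

variable {M} {Y : Finset α}

lemma isUniformOn_of_rk_eq_card (hY : Y ⊆ M.E) (hind : M.rk Y = Y.card) : M.IsUniformOn Y := by
  intro A hA
  rw [M.rk_eq_card_of_subset hA hY hind, hind, min_eq_left (card_le_card hA)]

lemma isUniformOn_of_forall_isCyclicFlat (hY : Y ⊆ M.E)
    (h : ∀ Z, M.IsCyclicFlat Z → M.rk Z < M.rk Y → M.rk (Z ∩ Y) = (Z ∩ Y).card) :
    M.IsUniformOn Y := by
  intro A hA
  have hAE := hA.trans hY
  have hle_card := M.rk_le_card A hAE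
  have hle_rk := M.rk_mono A Y hA hY
  by_contra hne
  have hlt : M.rk A < min A.card (M.rk Y) := lt_of_le_of_ne (le_min hle_card hle_rk) hne
  obtain ⟨Z, hZ, hZA, hdep⟩ :=
    exists_isCyclicFlat_rk_inter_lt_card hAE (hlt.trans_le (min_le_left _ _))
  have hind := h Z hZ (hZA.trans_lt (hlt.trans_le (min_le_right _ _)))
  have := M.rk_eq_card_of_subset (inter_subset_inter_left hA) (inter_subset_right.trans hY) hind
  omega

lemma IsUniformOn.isCyclic (hU : M.IsUniformOn Y) (hY : Y ⊆ M.E) (hdep : M.rk Y < Y.card) :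
    M.IsCyclic Y := by
  refine ⟨hY, filter_true_of_mem fun e he => ?_⟩
  rw [hU _ (erase_subset e Y), card_erase_of_mem he]
  omega

lemma IsUniformOn.rk_inter_eq_card (hU : M.IsUniformOn Y) {Z : Finset α} (hZ : Z ⊆ M.E)
    (hZY : M.rk Z < M.rk Y) : M.rk (Z ∩ Y) = (Z ∩ Y).card := by
  have hmono := M.rk_mono (Z ∩ Y) Z inter_subset_left hZ
  rw [hU _ inter_subset_right] at hmono ⊢
  omega

end Uniform

end FinMatroid

theorem restriction_uniform_iff_general {α : Type*} [DecidableEq α] (M : FinMatroid α)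
    (Y : Finset α) (hYE : Y ⊆ M.E) :
    (∀ A ⊆ Y, M.rk A = min A.card (M.rk Y)) ↔
      (M.rk Y = Y.card ∨
        (M.IsCyclic Y ∧
          ∀ Z, M.IsCyclicFlat Z → M.rk Z < M.rk Y → M.rk (Z ∩ Y) = (Z ∩ Y).card)) := by
  change M.IsUniformOn Y ↔ _
  constructor
  · intro hU
    rcases (M.rk_le_card Y hYE).eq_or_lt with hind | hdep
    · exact Or.inl hind
    · exact Or.inr ⟨hU.isCyclic hYE hdep, fun Z hZ => hU.rk_inter_eq_card hZ.1⟩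
  · rintro (hind | ⟨-, hZ⟩)
    · exact FinMatroid.isUniformOn_of_rk_eq_card hYE hind
    · exact FinMatroid.isUniformOn_of_forall_isCyclicFlat hYE hZ

/-- For `Y ⊆ E` of full rank with `k = ρ(Y)`, the restriction `M|Y` is
uniform (`ρ(A) = min(|A|, k)` for all `A ⊆ Y`) iff either `Y` is a basis of `M`, or
`Y` is a cyclic set and `Z ∩ Y` is independent for every cyclic flat `Z` with
`ρ(Z) < k`. -/
theorem restriction_uniform_iff {α : Type*} [DecidableEq α] (M : FinMatroid α)
    (Y : Finset α) (hYE : Y ⊆ M.E) (hfull : M.rk Y = M.rk M.E) :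
    (∀ A ⊆ Y, M.rk A = min A.card (M.rk Y)) ↔
      (M.rk Y = Y.card ∨
        (M.IsCyclic Y ∧
          ∀ Z, M.IsCyclicFlat Z → M.rk Z < M.rk Y → M.rk (Z ∩ Y) = (Z ∩ Y).card)) :=
  restriction_uniform_iff_general M Y hYE
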